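/- Let X be a Hausdorff uniform space with uniformity 𝒰. If X has property (P) and no isolated point, then every topologically stable homeomorphism h : X → X has the finite shadowing property and the strict periodic shadowing property. -/

import Mathlib

open Filter Topology Set

section Defs

variable {Z : Type*} [UniformSpace Z]

/-- A uniform space `Z` has property (P). -/
def PropertyP (Z : Type*) [UniformSpace Z] : Prop :=
  ∀ V ∈ uniformity Z, ∃ U ∈ uniformity Z,
    ∀ (k : ℕ), 1 ≤ k → ∀ a b : Fin k → Z, Function.Injective a → Function.Injective b →
      (∀ j : Fin k, (a j, b j) ∈ U) →
      ∃ h : Z ≃ₜ Z, (∀ j : Fin k, h (a j) = b j) ∧ ∀ x : Z, (x, h x) ∈ V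

/-- `f` has the finite shadowing property (uniform space version). -/
def FiniteShadowingPropertyU (f : Z → Z) : Prop :=
  ∀ V ∈ uniformity Z, ∃ U ∈ uniformity Z, ∀ (k : ℕ), 1 ≤ k → ∀ x : ℕ → Z,
    (∀ j < k, (f (x j), x (j + 1)) ∈ U) →
    ∃ a : Z, ∀ j ≤ k, (x j, f^[j] a) ∈ V

/-- `f` has the strict periodic shadowing property (uniform space version): every `U`-cycle
`(x_j)_{j=0}^k` for `f` is `V`-shadowed by some point `a` with `f^[k] a = a`. -/
def StrictPeriodicShadowingPropertyU (f : Z → Z) : Prop :=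
  ∀ V ∈ uniformity Z, ∃ U ∈ uniformity Z, ∀ (k : ℕ), 1 ≤ k → ∀ x : ℕ → Z,
    (∀ j < k, (f (x j), x (j + 1)) ∈ U) → x k = x 0 →
    ∃ a : Z, f^[k] a = a ∧ ∀ j ≤ k, (x j, f^[j] a) ∈ V

/-- The homeomorphism `h` is topologically stable (uniform space version). -/
def TopologicallyStableU (h : Z ≃ₜ Z) : Prop :=
  ∀ V ∈ uniformity Z, ∃ U ∈ uniformity Z, ∀ g : Z ≃ₜ Z,
    (∀ x : Z, (h x, g x) ∈ U) →
    ∃ φ : Z → Z, Continuous φ ∧ (∀ x : Z, h (φ x) = φ (g x)) ∧ ∀ x : Z, (x, φ x) ∈ V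

end Defs

/-!
Move the points of a `U`-chain `x₀, …, x_k` of `h` slightly so that they become pairwise distinct
(for a cycle: distinct except `y_k = y₀`); this uses that `X` has no isolated points. Property (P)
then gives a homeomorphism `e` close to the identity with `e (h yⱼ) = yⱼ₊₁`, so `g = e ∘ h` is close
to `h` and has `y₀, …, y_k` as an orbit segment. Topological stability provides `φ` close to the
identity with `h ∘ φ = φ ∘ g`, and `a = φ y₀` shadows the chain, since `hʲ a = φ yⱼ`; for a cycle
`h^k a = φ y_k = φ y₀ = a`.
-/

open scoped Uniformity SetRel

theorem Function.iterate_apply_eq_of_map_eq_succ {α : Type*} {f : α → α} {y : ℕ → α} {k : ℕ}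
    (hy : ∀ j < k, f (y j) = y (j + 1)) : ∀ j ≤ k, f^[j] (y 0) = y j := by
  intro j hj
  induction j with
  | zero => rfl
  | succ j ih => rw [Function.iterate_succ_apply', ih (by omega), hy j (by omega)]

section

variable {X : Type*}

theorem exists_injOn_Iio_forall_mem {N : ℕ → Set X} (hN : ∀ j, (N j).Infinite) (n : ℕ) :
    ∃ y : ℕ → X, InjOn y (Iio n) ∧ ∀ j < n, y j ∈ N j := by
  induction n with
  | zero => exact ⟨fun _ => (hN 0).nonempty.some, by simp, by simp⟩
  | succ n ih =>
    obtain ⟨y, hy_inj, hy_mem⟩ := ih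
    obtain ⟨z, hz_mem, hz_new⟩ := (hN n).exists_notMem_finite ((finite_Iio n).image y)
    have h_eqOn : EqOn (Function.update y n z) y (Iio n) :=
      fun j hj => Function.update_of_ne (ne_of_lt hj) _ _
    refine ⟨Function.update y n z, ?_, fun j hj => ?_⟩
    · rw [Iio_add_one_eq_Iic, ← Iio_insert, injOn_insert self_notMem_Iio,
        h_eqOn.injOn_iff, h_eqOn.image_eq, Function.update_self]
      exact ⟨hy_inj, hz_new⟩
    · rcases Nat.lt_succ_iff_lt_or_eq.mp hj with hj | rfl
      · rw [h_eqOn hj]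
        exact hy_mem j hj
      · rwa [Function.update_self]

theorem exists_injOn_near_of_nhdsNE_neBot [TopologicalSpace X] [T1Space X]
    (hni : ∀ x : X, (𝓝[≠] x).NeBot) {N : X → Set X} (hN : ∀ p, N p ∈ 𝓝 p) (x : ℕ → X)
    {k : ℕ} (hk : 0 < k) :
    ∃ y : ℕ → X, InjOn y (Iio k) ∧ InjOn y (Ioc 0 k) ∧ (x k = x 0 → y k = y 0) ∧
      ∀ j ≤ k, y j ∈ N (x j) := by
  have hN_inf : ∀ j, (N (x j)).Infinite := fun j => infinite_of_mem_nhds (x j) (hN (x j))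
  by_cases hcyc : x k = x 0
  · obtain ⟨y, hy_inj, hy_mem⟩ := exists_injOn_Iio_forall_mem hN_inf k
    set σ : ℕ → ℕ := fun j => if j = k then 0 else j
    have hσ_lt : ∀ {j}, j < k → σ j = j := fun hj => if_neg hj.ne
    refine ⟨y ∘ σ, ?_, ?_, fun _ => by simp [σ], fun j hj => ?_⟩
    · refine hy_inj.comp (fun i hi j hj hij => ?_) (fun j hj => ?_)
      · simpa only [hσ_lt hi, hσ_lt hj] using hij
      · simpa only [hσ_lt hj] using hj
    · refine hy_inj.comp (fun i hi j hj hij => ?_) (fun j hj => ?_)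
      · simp only [σ, mem_Ioc] at hi hj hij
        split_ifs at hij <;> omega
      · simp only [σ, mem_Ioc, mem_Iio] at hj ⊢
        split_ifs <;> omega
    · rcases hj.lt_or_eq with hj | rfl
      · simpa only [Function.comp_apply, hσ_lt hj] using hy_mem j hj
      · simpa [σ, hcyc] using hy_mem 0 hk
  · obtain ⟨y, hy_inj, hy_mem⟩ := exists_injOn_Iio_forall_mem hN_inf (k + 1)
    refine ⟨y, hy_inj.mono (Iio_subset_Iio k.le_succ), hy_inj.mono fun j hj => ?_, (absurd · hcyc),
      fun j hj => hy_mem j (Nat.lt_succ_of_le hj)⟩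
    exact Nat.lt_succ_of_le hj.2

def IsUChain (f : X → X) (U : SetRel X X) (k : ℕ) (x : ℕ → X) : Prop :=
  ∀ j < k, (f (x j), x (j + 1)) ∈ U

theorem IsUChain.of_near {f : X → X} {W : SetRel X X} [W.IsSymm] {k : ℕ} {x y : ℕ → X}
    (hx : IsUChain f W k x) (hxy : ∀ j ≤ k, (x j, y j) ∈ W ∧ (f (x j), f (y j)) ∈ W) :
    IsUChain f (W ○ W ○ W) k y :=
  fun j hj => ⟨x (j + 1), ⟨f (x j), W.symm (hxy j hj.le).2, hx j hj⟩, (hxy (j + 1) hj).1⟩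

section UniformSpace

variable [UniformSpace X]

theorem PropertyP.exists_homeomorph_map_chain (hP : PropertyP X) (f : X ≃ₜ X) {V : SetRel X X}
    (hV : V ∈ 𝓤 X) :
    ∃ U ∈ 𝓤 X, ∀ k, 0 < k → ∀ y : ℕ → X, InjOn y (Iio k) → InjOn y (Ioc 0 k) →
      IsUChain f U k y → ∃ g : X ≃ₜ X, (∀ x, (f x, g x) ∈ V) ∧ ∀ j < k, g (y j) = y (j + 1) := by
  obtain ⟨U, hU, hPU⟩ := hP V hV
  refine ⟨U, hU, fun k hk y hy₀ hy₁ hy => ?_⟩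
  have ha : Function.Injective fun j : Fin k => f (y j) :=
    fun i j hij => Fin.ext (hy₀ i.isLt j.isLt (f.injective hij))
  have hb : Function.Injective fun j : Fin k => y (j + 1) := fun i j hij =>
    Fin.ext (Nat.succ_injective (hy₁ ⟨i.val.succ_pos, i.isLt⟩ ⟨j.val.succ_pos, j.isLt⟩ hij))
  obtain ⟨e, he_map, he_near⟩ := hPU k hk _ _ ha hb fun j => hy j j.isLt
  exact ⟨f.trans e, fun x => he_near (f x), fun j hj => he_map ⟨j, hj⟩⟩

theorem TopologicallyStableU.exists_shadow_of_orbit_segment {h : X ≃ₜ X}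
    (hstable : TopologicallyStableU h) {V : SetRel X X} (hV : V ∈ 𝓤 X) :
    ∃ U ∈ 𝓤 X, ∀ g : X ≃ₜ X, (∀ x, (h x, g x) ∈ U) → ∀ (k : ℕ) (y : ℕ → X),
      (∀ j < k, g (y j) = y (j + 1)) →
      ∃ a, (∀ j ≤ k, (y j, h^[j] a) ∈ V) ∧ (y k = y 0 → h^[k] a = a) := by
  obtain ⟨U, hU, hstab⟩ := hstable V hV
  refine ⟨U, hU, fun g hg k y hy => ?_⟩
  obtain ⟨φ, -, hφ, hφ_near⟩ := hstab g hg
  have hsemi : Function.Semiconj φ g h := fun x => (hφ x).symm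
  have horbit : ∀ j ≤ k, h^[j] (φ (y 0)) = φ (y j) := fun j hj => by
    rw [← hsemi.iterate_right j (y 0), Function.iterate_apply_eq_of_map_eq_succ hy j hj]
  refine ⟨φ (y 0), fun j hj => horbit j hj ▸ hφ_near (y j), fun hcyc => ?_⟩
  rw [horbit k le_rfl, hcyc]

theorem exists_shadow_of_propertyP_of_topologicallyStableU [T1Space X] (hP : PropertyP X)
    (hni : ∀ x : X, (𝓝[≠] x).NeBot) {h : X ≃ₜ X} (hstable : TopologicallyStableU h)
    {V : SetRel X X} (hV : V ∈ 𝓤 X) :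
    ∃ W ∈ 𝓤 X, ∀ k, 0 < k → ∀ x : ℕ → X, IsUChain h W k x →
      ∃ a, (∀ j ≤ k, (x j, h^[j] a) ∈ V) ∧ (x k = x 0 → h^[k] a = a) := by
  obtain ⟨V₂, hV₂, hV₂V⟩ := comp_mem_uniformity_sets hV
  obtain ⟨Us, hUs, hshadow⟩ := hstable.exists_shadow_of_orbit_segment hV₂
  obtain ⟨UP, hUP, hmap⟩ := hP.exists_homeomorph_map_chain h hUs
  obtain ⟨W, hW, hW_symm, hW_sub⟩ := comp_comp_symm_mem_uniformity_sets (inter_mem hUP hV₂)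
  have := isRefl_of_mem_uniformity hW
  have hWV₂ : W ⊆ V₂ := fun p hp =>
    (hW_sub (SetRel.left_subset_comp (SetRel.left_subset_comp hp))).2
  refine ⟨W, hW, fun k hk x hx => ?_⟩
  obtain ⟨y, hy₀, hy₁, hy_cyc, hy_near⟩ := exists_injOn_near_of_nhdsNE_neBot hni
    (N := fun p => UniformSpace.ball p W ∩ h ⁻¹' UniformSpace.ball (h p) W)
    (fun p => inter_mem (UniformSpace.ball_mem_nhds p hW)
      (h.continuous.continuousAt.preimage_mem_nhds (UniformSpace.ball_mem_nhds _ hW))) x hk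
  obtain ⟨g, hg_near, hg_y⟩ :=
    hmap k hk y hy₀ hy₁ fun j hj => (hW_sub (hx.of_near hy_near j hj)).1
  obtain ⟨a, ha_near, ha_per⟩ := hshadow g hg_near k y hg_y
  exact ⟨a, fun j hj => hV₂V ⟨y j, hWV₂ (hy_near j hj).1, ha_near j hj⟩,
    fun hx_cyc => ha_per (hy_cyc hx_cyc)⟩

end UniformSpace

end

/-- Let `X` be a Hausdorff uniform space. If `X` has property (P) and no isolated point, then
every topologically stable homeomorphism `h : X → X` has the finite shadowing property and the
strict periodic shadowing property. -/
theorem topologicallyStable_shadowing_of_propertyP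
    {X : Type*} [UniformSpace X] [T2Space X]
    (hP : PropertyP X) (hni : ∀ x : X, Filter.NeBot (𝓝[≠] x))
    (h : X ≃ₜ X) (hstable : TopologicallyStableU h) :
    FiniteShadowingPropertyU (⇑h) ∧ StrictPeriodicShadowingPropertyU (⇑h) := by
  refine ⟨fun V hV => ?_, fun V hV => ?_⟩ <;>
    obtain ⟨W, hW, hshadow⟩ :=
      exists_shadow_of_propertyP_of_topologicallyStableU hP hni hstable hV
  · exact ⟨W, hW, fun k hk x hx => (hshadow k hk x hx).imp fun _ ha => ha.1⟩
  · exact ⟨W, hW, fun k hk x hx hx_cyc => (hshadow k hk x hx).imp fun _ ha => ⟨ha.2 hx_cyc, ha.1⟩⟩
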